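/- arXiv:1003.5765 — 5 statements merged into one kernel-verified Lean document; each statement's English description precedes it below -/
import Mathlib

section
/- Let (λ_k)_{k∈ℕ} be a sequence of reals with 0 < λ_k < 1 for all k, Σ_k λ_k = 1, and finite entropy Σ_k λ_k (−log λ_k) < ∞. Then there exists a monotone nondecreasing sequence of positive reals (μ_k) with μ_k → +∞ such that Σ_k μ_k λ_k (−log λ_k) < ∞ and, for every β > 0, the series Σ_k λ_k^{β μ_k} converges (equivalently Σ_k exp(−β μ_k (−log λ_k)) < ∞). -/
/-!
Let `a k = λ k (−log λ k)` and let `r k = ∑_{n ≥ k} a n` be the tails of the (finite) entropy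
series. Take `μ k = 1 / √(r k)`: it is positive, nondecreasing and tends to `+∞` because
`r k ↓ 0`, while `μ k a k = (r k − r (k+1)) / √(r k) ≤ 2 (√(r k) − √(r (k+1)))` telescopes,
so `∑ μ k a k ≤ 2 √(r 0)`. Finally `exp (−β μ k (−log λ k)) = λ k ^ (β μ k) ≤ λ k` as soon as
`β μ k ≥ 1`, so the Gibbs series is dominated by `∑ λ k = 1`.
-/

open Real Filter Topology

lemma Antitone.summable_sub_succ {f : ℕ → ℝ} {c : ℝ} (hf : Antitone f) (hc : ∀ n, c ≤ f n) :
    Summable fun n => f n - f (n + 1) := by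
  refine summable_of_sum_range_le (c := f 0 - c) (fun n => sub_nonneg.2 (hf n.le_succ)) ?_
  intro n
  rw [Finset.sum_range_sub']
  linarith [hc n]

lemma sub_div_sqrt_le_two_mul_sub_sqrt {x y : ℝ} (hx : 0 < x) (hy : 0 ≤ y) :
    (x - y) / √x ≤ 2 * (√x - √y) := by
  have hsx : 0 < √x := sqrt_pos.2 hx
  rw [div_le_iff₀ hsx]
  nlinarith [sq_sqrt hx.le, sq_sqrt hy, sq_nonneg (√x - √y)]

noncomputable def tailSum (a : ℕ → ℝ) (k : ℕ) : ℝ := ∑' n, a (n + k)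

namespace tailSum

variable {a : ℕ → ℝ}

lemma eq_add_succ (ha : Summable a) (k : ℕ) : tailSum a k = a k + tailSum a (k + 1) := by
  have := ((summable_nat_add_iff k).2 ha).tsum_eq_zero_add
  simpa [tailSum, Nat.add_assoc, Nat.add_comm 1 k] using this

lemma pos (ha : Summable a) (hpos : ∀ k, 0 < a k) (k : ℕ) : 0 < tailSum a k :=
  ((summable_nat_add_iff k).2 ha).tsum_pos (fun _ => (hpos _).le) 0 (hpos _)

lemma antitone (ha : Summable a) (hnonneg : ∀ k, 0 ≤ a k) : Antitone (tailSum a) :=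
  antitone_nat_of_succ_le fun k => by linarith [eq_add_succ ha k, hnonneg k]

lemma tendsto_zero : Tendsto (tailSum a) atTop (𝓝 0) :=
  tendsto_sum_nat_add a

end tailSum

section Dini

variable {a : ℕ → ℝ}

lemma antitone_sqrt_tailSum (ha : Summable a) (hnonneg : ∀ k, 0 ≤ a k) :
    Antitone fun k => √(tailSum a k) := fun _ _ h =>
  sqrt_le_sqrt (tailSum.antitone ha hnonneg h)

lemma monotone_inv_sqrt_tailSum (ha : Summable a) (hpos : ∀ k, 0 < a k) :
    Monotone fun k => (√(tailSum a k))⁻¹ := fun _ _ h =>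
  inv_anti₀ (sqrt_pos.2 (tailSum.pos ha hpos _)) (antitone_sqrt_tailSum ha (fun k => (hpos k).le) h)

lemma tendsto_inv_sqrt_tailSum_atTop (ha : Summable a) (hpos : ∀ k, 0 < a k) :
    Tendsto (fun k => (√(tailSum a k))⁻¹) atTop atTop := by
  refine Tendsto.inv_tendsto_nhdsGT_zero (tendsto_nhdsWithin_of_tendsto_nhds_of_eventually_within _
    ?_ (Eventually.of_forall fun k => sqrt_pos.2 (tailSum.pos ha hpos k)))
  simpa [Function.comp_def] using (continuous_sqrt.tendsto 0).comp tailSum.tendsto_zero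

lemma summable_inv_sqrt_tailSum_mul (ha : Summable a) (hpos : ∀ k, 0 < a k) :
    Summable fun k => (√(tailSum a k))⁻¹ * a k := by
  have hbound : ∀ k, (√(tailSum a k))⁻¹ * a k ≤ 2 * (√(tailSum a k) - √(tailSum a (k + 1))) := by
    intro k
    have hak : a k = tailSum a k - tailSum a (k + 1) := by linarith [tailSum.eq_add_succ ha k]
    rw [inv_mul_eq_div, hak]
    exact sub_div_sqrt_le_two_mul_sub_sqrt (tailSum.pos ha hpos k) (tailSum.pos ha hpos _).le
  have htelescope : Summable fun k => √(tailSum a k) - √(tailSum a (k + 1)) :=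
    (antitone_sqrt_tailSum ha fun k => (hpos k).le).summable_sub_succ fun _ => sqrt_nonneg _
  exact .of_nonneg_of_le (fun k => (mul_pos (inv_pos.2 (sqrt_pos.2 (tailSum.pos ha hpos k)))
    (hpos k)).le) hbound (htelescope.mul_left 2)

theorem exists_monotone_tendsto_atTop_summable_mul (ha : Summable a) (hpos : ∀ k, 0 < a k) :
    ∃ μ : ℕ → ℝ, Monotone μ ∧ (∀ k, 0 < μ k) ∧ Tendsto μ atTop atTop ∧
      Summable fun k => μ k * a k :=
  ⟨_, monotone_inv_sqrt_tailSum ha hpos,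
    fun k => inv_pos.2 (sqrt_pos.2 (tailSum.pos ha hpos k)),
    tendsto_inv_sqrt_tailSum_atTop ha hpos, summable_inv_sqrt_tailSum_mul ha hpos⟩

end Dini

lemma Summable.rpow_of_tendsto_atTop {p ν : ℕ → ℝ} (hp : Summable p) (hp0 : ∀ k, 0 ≤ p k)
    (hp1 : ∀ k, p k ≤ 1) (hν : Tendsto ν atTop atTop) : Summable fun k => p k ^ ν k := by
  refine hp.of_norm_bounded_eventually_nat ?_
  filter_upwards [hν.eventually_ge_atTop 1] with k hk
  rw [norm_of_nonneg (rpow_nonneg (hp0 k) _)]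
  exact rpow_le_self_of_le_one (hp0 k) (hp1 k) hk

/-- Shirokov's trick: for any probability distribution `(λ k)` with finite entropy
there is a nondecreasing sequence `μ k → +∞` such that `∑ μ k • λ k (−log λ k) < ∞`
and `∑ exp(−β μ k (−log λ k)) < ∞` for all `β > 0`. -/
theorem exists_gibbs_hamiltonian_for_finite_entropy
    (lam : ℕ → ℝ) (hlam : ∀ k, 0 < lam k ∧ lam k < 1)
    (hsum : HasSum lam 1)
    (hent : Summable (fun k => lam k * (-Real.log (lam k)))) :
    ∃ μ : ℕ → ℝ, Monotone μ ∧ (∀ k, 0 < μ k) ∧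
      Filter.Tendsto μ Filter.atTop Filter.atTop ∧
      Summable (fun k => μ k * (lam k * (-Real.log (lam k)))) ∧
      ∀ β : ℝ, 0 < β →
        Summable (fun k => Real.exp (-β * (μ k * (-Real.log (lam k))))) := by
  have hent_pos : ∀ k, 0 < lam k * -log (lam k) := fun k =>
    mul_pos (hlam k).1 (neg_pos.2 (log_neg (hlam k).1 (hlam k).2))
  obtain ⟨μ, hmono, hμpos, hμtop, hμsum⟩ := exists_monotone_tendsto_atTop_summable_mul hent hent_pos
  refine ⟨μ, hmono, hμpos, hμtop, hμsum, fun β hβ => ?_⟩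
  have hgibbs : ∀ k, exp (-β * (μ k * -log (lam k))) = lam k ^ (β * μ k) := fun k => by
    rw [rpow_def_of_pos (hlam k).1]
    congr 1
    ring
  simp only [hgibbs]
  exact hsum.summable.rpow_of_tendsto_atTop (fun k => (hlam k).1.le) (fun k => (hlam k).2.le)
    (hμtop.const_mul_atTop hβ)
end

section
/- Let (n_j)_{j∈ℕ} be a family of permutations of ℕ such that for every i the map j ↦ n_j(i) is also a permutation of ℕ. Let (q_j)_{j∈ℕ} be a probability distribution on ℕ (q_j ≥ 0, Σ_j q_j = 1) with infinite Shannon entropy, Σ_j (−q_j log q_j) = +∞. Then for every probability distribution (P_i)_{i∈ℕ} on ℕ, the sequence r(j) := Σ_i P_i q_{n_j(i)} is again a probability distribution on ℕ and has infinite Shannon entropy: Σ_j (−r(j) log r(j)) = +∞. -/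
open Real

/-- Concavity step: `t * negMulLog a ≤ negMulLog (t*a + s)` when `s ≤ 1 - t`. -/
lemma negMulLog_step {t a s : ℝ} (ht0 : 0 ≤ t) (ha0 : 0 ≤ a) (ha1 : a ≤ 1)
    (hs0 : 0 ≤ s) (hs : s ≤ 1 - t) :
    t * Real.negMulLog a ≤ Real.negMulLog (t * a + s) := by
  have ht1 : t ≤ 1 := by linarith
  rcases eq_or_lt_of_le ht1 with h1 | h1
  · have hs' : s = 0 := le_antisymm (by linarith) hs0
    subst h1; simp [hs']
  · set b : ℝ := s / (1 - t) with hb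
    have h1t : 0 < 1 - t := by linarith
    have hb0 : 0 ≤ b := div_nonneg hs0 h1t.le
    have hb1 : b ≤ 1 := by
      rw [hb, div_le_one h1t]; linarith
    have key := Real.concaveOn_negMulLog.2 (Set.mem_Ici.2 ha0) (Set.mem_Ici.2 hb0)
      ht0 h1t.le (by ring)
    have hsb : (1 - t) * b = s := by
      rw [hb]; field_simp
    have hbn : 0 ≤ Real.negMulLog b := Real.negMulLog_nonneg hb0 hb1
    simp only [smul_eq_mul] at key
    rw [hsb] at key
    nlinarith [mul_nonneg h1t.le hbn]

/-- For a doubly-stochastic classical channel built from a family of permutations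
`(n j)` whose transposed family is also made of permutations, and a distribution
`q` with infinite Shannon entropy, the output `r j = ∑ i, P i * q (n j i)` of any
input distribution `P` is a probability distribution with infinite entropy. -/
theorem unital_classical_channel_infinite_entropy
    (n : ℕ → Equiv.Perm ℕ)
    (hcol : ∀ i : ℕ, Function.Bijective (fun j : ℕ => n j i))
    (q : ℕ → ℝ) (hq : ∀ j, 0 ≤ q j) (hqsum : HasSum q 1)
    (hqent : ∑' j, ENNReal.ofReal (-(q j) * Real.log (q j)) = ⊤)
    (P : ℕ → ℝ) (hP : ∀ i, 0 ≤ P i) (hPsum : HasSum P 1)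
    (r : ℕ → ℝ) (hr : ∀ j, r j = ∑' i, P i * q (n j i)) :
    (∀ j, 0 ≤ r j) ∧ HasSum r 1 ∧
      ∑' j, ENNReal.ofReal (-(r j) * Real.log (r j)) = ⊤ := by
  -- basic bounds
  have hq1 : ∀ k, q k ≤ 1 := fun k => le_hasSum hqsum k fun i _ => hq i
  have hP1 : ∀ i, P i ≤ 1 := fun i => le_hasSum hPsum i fun k _ => hP k
  -- summability of each row
  have hrow : ∀ j, Summable fun i => P i * q (n j i) := by
    intro j
    refine Summable.of_nonneg_of_le (fun i => mul_nonneg (hP i) (hq _))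
      (fun i => ?_) hPsum.summable
    calc P i * q (n j i) ≤ P i * 1 := by
          exact mul_le_mul_of_nonneg_left (hq1 _) (hP i)
      _ = P i := mul_one _
  have hr0 : ∀ j, 0 ≤ r j := by
    intro j; rw [hr j]
    exact tsum_nonneg fun i => mul_nonneg (hP i) (hq _)
  -- ENNReal versions
  set Q : ℕ → ENNReal := fun k => ENNReal.ofReal (q k) with hQ
  set Pe : ℕ → ENNReal := fun i => ENNReal.ofReal (P i) with hPe
  have hQsum : ∑' k, Q k = 1 := by
    rw [hQ]
    rw [← ENNReal.ofReal_tsum_of_nonneg hq hqsum.summable, hqsum.tsum_eq,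
      ENNReal.ofReal_one]
  have hofr : ∀ j, ENNReal.ofReal (r j) = ∑' i, Pe i * Q (n j i) := by
    intro j
    rw [hr j, ENNReal.ofReal_tsum_of_nonneg (fun i => mul_nonneg (hP i) (hq _)) (hrow j)]
    exact tsum_congr fun i => ENNReal.ofReal_mul (hP i)
  -- column sums
  have hcolsum : ∀ i, ∑' j, Q (n j i) = 1 := by
    intro i
    have := (Equiv.ofBijective _ (hcol i)).tsum_eq Q
    simpa [Equiv.ofBijective] using this.trans hQsum
  have htot : ∑' j, ENNReal.ofReal (r j) = 1 := by
    calc ∑' j, ENNReal.ofReal (r j) = ∑' j, ∑' i, Pe i * Q (n j i) :=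
          tsum_congr hofr
      _ = ∑' i, ∑' j, Pe i * Q (n j i) := ENNReal.tsum_comm
      _ = ∑' i, Pe i * ∑' j, Q (n j i) := by
          exact tsum_congr fun i => ENNReal.tsum_mul_left
      _ = ∑' i, Pe i := by
          refine tsum_congr fun i => ?_
          rw [hcolsum i, mul_one]
      _ = 1 := by
          rw [hPe, ← ENNReal.ofReal_tsum_of_nonneg hP hPsum.summable, hPsum.tsum_eq,
            ENNReal.ofReal_one]
  -- HasSum r 1
  have hrsum : HasSum r 1 := by
    have h1 : ∑' j, ((Real.toNNReal (r j) : NNReal) : ENNReal)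
        = ((1 : NNReal) : ENNReal) := by
      simpa [ENNReal.ofReal] using htot
    have h2 : HasSum (fun j => ((Real.toNNReal (r j) : NNReal) : ENNReal))
        ((1 : NNReal) : ENNReal) := by
      rw [← h1]; exact ENNReal.summable.hasSum
    have h3 : HasSum (fun j => Real.toNNReal (r j)) 1 := ENNReal.hasSum_coe.1 h2
    have h4 := NNReal.hasSum_coe.2 h3
    rw [show (fun j => ((Real.toNNReal (r j) : NNReal) : ℝ)) = r from
      funext fun j => Real.coe_toNNReal _ (hr0 j)] at h4
    simpa using h4
  refine ⟨hr0, hrsum, ?_⟩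
  -- choose i₀ with P i₀ > 0
  obtain ⟨i₀, hi₀⟩ : ∃ i, 0 < P i := by
    by_contra h
    push_neg at h
    have h0 : ∀ i, P i = (fun _ : ℕ => (0:ℝ)) i := fun i => le_antisymm (h i) (hP i)
    have h1 : (1 : ℝ) = 0 := by
      rw [← hPsum.tsum_eq, tsum_congr h0, tsum_zero]
    norm_num at h1
  classical
  set σ : ℕ → ℕ := fun j => n j i₀ with hσ
  -- pointwise entropy bound
  have hpt : ∀ j, P i₀ * Real.negMulLog (q (σ j)) ≤ Real.negMulLog (r j) := by
    intro j
    set s : ℝ := r j - P i₀ * q (σ j) with hs'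
    have hterm : P i₀ * q (σ j) ≤ r j := by
      rw [hr j]
      exact Summable.le_tsum (hrow j) i₀ fun i _ => mul_nonneg (hP i) (hq _)
    have hs0 : 0 ≤ s := by simp [hs']; linarith
    have hrest : r j ≤ P i₀ * q (σ j) + (1 - P i₀) := by
      rw [hr j, Summable.tsum_eq_add_tsum_ite (hrow j) i₀]
      have hle : ∀ i : ℕ, P i * q (n j i) ≤ P i := fun i =>
        calc P i * q (n j i) ≤ P i * 1 :=
              mul_le_mul_of_nonneg_left (hq1 _) (hP i)
          _ = P i := mul_one _
      have hb1 : (∑' i, ite (i = i₀) 0 (P i * q (n j i))) ≤ ∑' i, ite (i = i₀) 0 (P i) := by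
        refine Summable.tsum_le_tsum (fun i => ?_) ?_ ?_
        · by_cases h : i = i₀
          · simp [h]
          · simp only [if_neg h]; exact hle i
        · refine Summable.of_nonneg_of_le (fun i => ?_) (fun i => ?_) hPsum.summable
          · by_cases h : i = i₀
            · simp [h]
            · simp only [if_neg h]; exact mul_nonneg (hP i) (hq _)
          · by_cases h : i = i₀
            · simp [h, hP i₀]
            · simp only [if_neg h]; exact hle i
        · refine Summable.of_nonneg_of_le (fun i => ?_) (fun i => ?_) hPsum.summable
          · by_cases h : i = i₀
            · simp [h]
            · simp only [if_neg h]; exact hP i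
          · by_cases h : i = i₀
            · simp [h, hP i₀]
            · simp only [if_neg h]; exact le_rfl
      have hb2 : (∑' i, ite (i = i₀) 0 (P i)) = 1 - P i₀ := by
        have := Summable.tsum_eq_add_tsum_ite hPsum.summable i₀
        rw [hPsum.tsum_eq] at this
        linarith
      linarith [hb1, hb2]
    have hs1 : s ≤ 1 - P i₀ := by simp [hs']; linarith
    have key := negMulLog_step (t := P i₀) (a := q (σ j)) (s := s)
      (hi₀.le) (hq _) (hq1 _) hs0 hs1
    have : P i₀ * q (σ j) + s = r j := by simp [hs']
    rwa [this] at key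
  -- conclude infinite entropy
  have hent' : ∑' k, ENNReal.ofReal (Real.negMulLog (q k)) = ⊤ := by
    rw [← hqent]
    exact tsum_congr fun k => by simp [Real.negMulLog]
  have hσent : ∑' j, ENNReal.ofReal (Real.negMulLog (q (σ j))) = ⊤ := by
    have := (Equiv.ofBijective _ (hcol i₀)).tsum_eq
      (fun k => ENNReal.ofReal (Real.negMulLog (q k)))
    simpa [Equiv.ofBijective, hσ] using this.trans hent'
  have hbig : (⊤ : ENNReal) ≤ ∑' j, ENNReal.ofReal (Real.negMulLog (r j)) := by
    calc (⊤ : ENNReal) = ENNReal.ofReal (P i₀) *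
          ∑' j, ENNReal.ofReal (Real.negMulLog (q (σ j))) := by
          rw [hσent, ENNReal.mul_top]
          simp [ENNReal.ofReal_pos.2 hi₀, ne_of_gt, (ENNReal.ofReal_pos.2 hi₀).ne']
      _ = ∑' j, ENNReal.ofReal (P i₀) * ENNReal.ofReal (Real.negMulLog (q (σ j))) :=
          ENNReal.tsum_mul_left.symm
      _ = ∑' j, ENNReal.ofReal (P i₀ * Real.negMulLog (q (σ j))) := by
          exact tsum_congr fun j => (ENNReal.ofReal_mul hi₀.le).symm
      _ ≤ ∑' j, ENNReal.ofReal (Real.negMulLog (r j)) :=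
          ENNReal.tsum_le_tsum fun j => ENNReal.ofReal_le_ofReal (hpt j)
  have : ∑' j, ENNReal.ofReal (Real.negMulLog (r j)) = ⊤ := top_le_iff.1 hbig
  rw [← this]
  exact tsum_congr fun j => by simp [Real.negMulLog]
end

section
/- Let Δ be the standard 2s×2s symplectic matrix (block-diagonal with blocks [[0, −1], [1, 0]]), let α be a real symmetric positive definite 2s×2s matrix, and suppose T is a real matrix with TᵀΔT = Δ and TᵀαT block-diagonal with blocks d_j·I₂, d_j > 0. Then the spectrum of the complex 2s×2s matrix Δ⁻¹α is exactly {i·d_j : j = 1, …, s} ∪ {−i·d_j : j = 1, …, s}; equivalently its characteristic polynomial is ∏_{j=1}^s (λ² + d_j²). -/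
open Matrix


/-- The standard `2s × 2s` symplectic matrix: block diagonal with `s` blocks
`[[0, -1], [1, 0]]`, indexed by `Fin 2 × Fin s`. -/
def stdSymplectic (s : ℕ) : Matrix (Fin 2 × Fin s) (Fin 2 × Fin s) ℝ :=
  Matrix.blockDiagonal fun _ : Fin s => !![0, -1; 1, 0]

lemma mem_spectrum_iff_det {n : Type*} [Fintype n] [DecidableEq n]
    (A : Matrix n n ℂ) (z : ℂ) :
    z ∈ spectrum ℂ A ↔ (z • (1 : Matrix n n ℂ) - A).det = 0 := by
  rw [spectrum.mem_iff, Algebra.algebraMap_eq_smul_one]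
  constructor
  · intro h
    by_contra hdet
    exact h ((Matrix.isUnit_iff_isUnit_det _).mpr (isUnit_iff_ne_zero.mpr hdet))
  · intro h hu
    exact ((Matrix.isUnit_iff_isUnit_det _).mp hu).ne_zero h


/-- If `Tᵀ Δ T = Δ` and `Tᵀ α T` is block diagonal with blocks `d j • I₂`, `d j > 0`,
then the spectrum of `Δ⁻¹ α` (as a complex matrix) is exactly `{± i d j}`. -/
theorem spectrum_inv_symplectic_mul_covariance (s : ℕ) (hs : 1 ≤ s)
    (α : Matrix (Fin 2 × Fin s) (Fin 2 × Fin s) ℝ)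
    (hα : α.PosDef) (hαsymm : α.IsSymm)
    (T : Matrix (Fin 2 × Fin s) (Fin 2 × Fin s) ℝ)
    (hT : Tᵀ * stdSymplectic s * T = stdSymplectic s)
    (d : Fin s → ℝ) (hd : ∀ j, 0 < d j)
    (hTα : Tᵀ * α * T =
      Matrix.blockDiagonal (fun j : Fin s => d j • (1 : Matrix (Fin 2) (Fin 2) ℝ))) :
    spectrum ℂ (((stdSymplectic s)⁻¹ * α).map (Complex.ofReal)) =
      {z : ℂ | ∃ j : Fin s, z = Complex.I * (d j : ℂ) ∨ z = -(Complex.I * (d j : ℂ))} := by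
  set Δ := stdSymplectic s with hΔ
  -- det Δ = 1
  have hΔdet : Δ.det = 1 := by
    simp [hΔ, stdSymplectic, Matrix.det_blockDiagonal, Matrix.det_fin_two_of]
  -- inverse of Δ
  have hΔinv : Δ⁻¹ = Matrix.blockDiagonal (fun _ : Fin s => !![(0:ℝ), 1; -1, 0]) := by
    apply Matrix.inv_eq_right_inv
    have hone : (fun _ : Fin s => !![(0:ℝ), -1; 1, 0] * !![(0:ℝ), 1; -1, 0])
        = (1 : Fin s → Matrix (Fin 2) (Fin 2) ℝ) := by
      funext j
      rw [Pi.one_apply, Matrix.one_fin_two]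
      norm_num [Matrix.mul_fin_two]
    rw [hΔ, stdSymplectic, ← Matrix.blockDiagonal_mul, hone, Matrix.blockDiagonal_one]
  have hΔunit : IsUnit Δ.det := by rw [hΔdet]; exact isUnit_one
  -- det T ≠ 0
  have hTdet : T.det * T.det = 1 := by
    have := congrArg Matrix.det hT
    rw [Matrix.det_mul, Matrix.det_mul, Matrix.det_transpose, hΔdet] at this
    linarith [this]
  have hTne : T.det ≠ 0 := by
    intro h; rw [h, zero_mul] at hTdet; exact zero_ne_one hTdet
  -- D and B
  set D := Matrix.blockDiagonal (fun j : Fin s => d j • (1 : Matrix (Fin 2) (Fin 2) ℝ)) with hD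
  set B := Matrix.blockDiagonal (fun j : Fin s => !![(0:ℝ), d j; -(d j), 0]) with hB
  have hΔiD : Δ⁻¹ * D = B := by
    have hfun : (fun j : Fin s => !![(0:ℝ), 1; -1, 0] * (d j • (1 : Matrix (Fin 2) (Fin 2) ℝ)))
        = fun j : Fin s => !![(0:ℝ), d j; -(d j), 0] := by
      funext j
      ext i k
      fin_cases i <;> fin_cases k <;>
        simp [Matrix.mul_apply, Fin.sum_univ_two, Matrix.one_apply]
    rw [hΔinv, hD, hB, ← Matrix.blockDiagonal_mul, hfun]
  -- (Tᵀ)⁻¹ = Δ T Δ⁻¹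
  have h1 : Tᵀ * (Δ * T * Δ⁻¹) = 1 := by
    calc Tᵀ * (Δ * T * Δ⁻¹) = (Tᵀ * Δ * T) * Δ⁻¹ := by simp only [mul_assoc]
    _ = Δ * Δ⁻¹ := by rw [hT]
    _ = 1 := Matrix.mul_nonsing_inv _ hΔunit
  have hTtinv : (Tᵀ)⁻¹ = Δ * T * Δ⁻¹ := Matrix.inv_eq_right_inv h1
  -- α T = (Tᵀ)⁻¹ D
  have hTtne : IsUnit (Tᵀ).det := by
    rw [Matrix.det_transpose]; exact isUnit_iff_ne_zero.mpr hTne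
  have hαT : α * T = (Tᵀ)⁻¹ * D := by
    have : (Tᵀ)⁻¹ * (Tᵀ * α * T) = (Tᵀ)⁻¹ * D := by rw [hTα]
    calc α * T = ((Tᵀ)⁻¹ * Tᵀ) * (α * T) := by
          rw [Matrix.nonsing_inv_mul _ hTtne, one_mul]
      _ = (Tᵀ)⁻¹ * (Tᵀ * α * T) := by simp only [mul_assoc]
      _ = (Tᵀ)⁻¹ * D := this
  -- key similarity over ℝ
  have hkey : (Δ⁻¹ * α) * T = T * B := by
    calc (Δ⁻¹ * α) * T = Δ⁻¹ * (α * T) := by simp only [mul_assoc]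
      _ = Δ⁻¹ * ((Δ * T * Δ⁻¹) * D) := by rw [hαT, hTtinv]
      _ = (Δ⁻¹ * Δ) * (T * (Δ⁻¹ * D)) := by simp only [mul_assoc]
      _ = T * B := by rw [Matrix.nonsing_inv_mul _ hΔunit, one_mul, hΔiD]
  -- move to ℂ
  set f := Complex.ofRealHom
  set M := ((Δ⁻¹ * α).map Complex.ofReal) with hM
  have hMap : ∀ (A C : Matrix (Fin 2 × Fin s) (Fin 2 × Fin s) ℝ),
      (A * C).map Complex.ofReal = A.map Complex.ofReal * C.map Complex.ofReal := by
    intro A C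
    exact Matrix.map_mul (f := f)
  have hkeyC : M * T.map Complex.ofReal = T.map Complex.ofReal * B.map Complex.ofReal := by
    rw [hM, ← hMap, ← hMap, hkey]
  set Tc := T.map Complex.ofReal with hTc
  set Bc := B.map Complex.ofReal with hBc
  have hTcdet : Tc.det ≠ 0 := by
    rw [hTc]
    have : Tc.det = Complex.ofReal T.det := (RingHom.map_det f T).symm
    rw [hTc] at this
    rw [this]
    exact_mod_cast hTne
  have hTcunit : IsUnit Tc.det := isUnit_iff_ne_zero.mpr hTcdet
  ext z
  rw [mem_spectrum_iff_det]
  have hsim : (z • (1 : Matrix (Fin 2 × Fin s) (Fin 2 × Fin s) ℂ) - M)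
      = Tc * (z • 1 - Bc) * Tc⁻¹ := by
    have hM' : M = Tc * Bc * Tc⁻¹ := by
      calc M = M * (Tc * Tc⁻¹) := by rw [Matrix.mul_nonsing_inv _ hTcunit, mul_one]
        _ = (M * Tc) * Tc⁻¹ := (mul_assoc _ _ _).symm
        _ = Tc * Bc * Tc⁻¹ := by rw [hkeyC]
    rw [hM']
    rw [Matrix.mul_sub, Matrix.sub_mul]
    congr 1
    rw [Matrix.mul_smul, mul_one, Matrix.smul_mul, Matrix.mul_nonsing_inv _ hTcunit]
  rw [hsim, Matrix.det_mul, Matrix.det_mul, Matrix.det_nonsing_inv]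
  have hcancel : Tc.det * (z • 1 - Bc).det * (Ring.inverse Tc.det)
      = (z • (1:Matrix (Fin 2 × Fin s) (Fin 2 × Fin s) ℂ) - Bc).det := by
    rw [Ring.inverse_eq_inv']
    field_simp
  rw [hcancel]
  -- now compute det of block diagonal
  have hblock : (z • (1:Matrix (Fin 2 × Fin s) (Fin 2 × Fin s) ℂ) - Bc)
      = Matrix.blockDiagonal (fun j : Fin s => !![z, -(d j : ℂ); (d j : ℂ), z]) := by
    have h1 : (z • (1:Matrix (Fin 2 × Fin s) (Fin 2 × Fin s) ℂ))
        = Matrix.blockDiagonal (fun _ : Fin s => z • (1 : Matrix (Fin 2) (Fin 2) ℂ)) := by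
      calc z • (1:Matrix (Fin 2 × Fin s) (Fin 2 × Fin s) ℂ)
          = z • Matrix.blockDiagonal (1 : Fin s → Matrix (Fin 2) (Fin 2) ℂ) := by
            rw [Matrix.blockDiagonal_one]
        _ = Matrix.blockDiagonal (z • (1 : Fin s → Matrix (Fin 2) (Fin 2) ℂ)) :=
            (Matrix.blockDiagonal_smul _ _).symm
        _ = Matrix.blockDiagonal (fun _ : Fin s => z • (1 : Matrix (Fin 2) (Fin 2) ℂ)) := rfl
    have hfun2 : ((fun _ : Fin s => z • (1 : Matrix (Fin 2) (Fin 2) ℂ))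
          - fun j : Fin s => (!![(0:ℝ), d j; -(d j), 0]).map Complex.ofReal)
        = fun j : Fin s => !![z, -(d j : ℂ); (d j : ℂ), z] := by
      funext j
      ext i k
      fin_cases i <;> fin_cases k <;>
        simp [Matrix.one_apply]
    rw [hBc, hB, Matrix.blockDiagonal_map _ _ Complex.ofReal_zero, h1,
      ← Matrix.blockDiagonal_sub, hfun2]
  rw [hblock, Matrix.det_blockDiagonal]
  have hdet2 : ∀ j : Fin s, (!![z, -(d j : ℂ); (d j : ℂ), z]).det
      = (z - Complex.I * (d j : ℂ)) * (z + Complex.I * (d j : ℂ)) := by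
    intro j
    rw [Matrix.det_fin_two_of]
    have : Complex.I * Complex.I = -1 := Complex.I_mul_I
    ring_nf
    rw [Complex.I_sq]
    ring
  simp only [hdet2]
  rw [Finset.prod_eq_zero_iff]
  constructor
  · rintro ⟨j, -, hj⟩
    rcases mul_eq_zero.mp hj with h | h
    · exact ⟨j, Or.inl (by linear_combination h)⟩
    · exact ⟨j, Or.inr (by linear_combination h)⟩
  · rintro ⟨j, hj | hj⟩
    · exact ⟨j, Finset.mem_univ j, by rw [hj]; ring⟩
    · exact ⟨j, Finset.mem_univ j, by rw [hj]; ring⟩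
end

section
/- Let Δ be the standard 2s×2s symplectic matrix (block-diagonal with blocks [[0, −1], [1, 0]]), α a real symmetric positive definite 2s×2s matrix, and T a real matrix with TᵀΔT = Δ and TᵀαT block-diagonal with blocks d_j·I₂, d_j > 0. Then: (a) the complex Hermitian matrix α + (i/2)Δ is positive semidefinite if and only if d_j ≥ 1/2 for all j; and (b) the complex Hermitian matrix α − (i/2)Δ is positive definite (equivalently, positive semidefinite and nondegenerate) if and only if d_j > 1/2 for all j. -/
open Matrix
open scoped ComplexOrder

/-!
The real matrix `T` is invertible (`det T ^ 2 = det Δ = 1`), and congruence by an invertible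
matrix preserves positive (semi)definiteness. Congruence by `T` turns `α + (t i) Δ` into the
block-diagonal matrix with blocks `d_j 1 + t σ_y`, where `σ_y = [[0, -i], [i, 0]]` is the Pauli
matrix. Such a block has eigenvalues `d_j ± t` with eigenvectors `(1, ± i)`, so it is positive
semidefinite iff `|t| ≤ d_j` and positive definite iff `|t| < d_j`; take `t = ± 1/2`.
-/

open Complex

namespace Matrix

section BlockDiagonal

variable {m o : Type*} [DecidableEq o]

@[simp]
theorem submatrix_blockDiagonal_self {R : Type*} [Zero R] (f : o → Matrix m m R) (j : o) :
    (blockDiagonal f).submatrix (fun i => (i, j)) (fun i => (i, j)) = f j := by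
  ext i k
  simp [blockDiagonal_apply]

variable [Fintype m] [Fintype o]

theorem dotProduct_blockDiagonal_mulVec {R : Type*} [Semiring R] [Star R]
    (f : o → Matrix m m R) (x : m × o → R) :
    star x ⬝ᵥ blockDiagonal f *ᵥ x =
      ∑ j, star (fun i => x (i, j)) ⬝ᵥ f j *ᵥ fun i => x (i, j) := by
  simp only [dotProduct, mulVec, blockDiagonal_apply, Pi.star_apply, Fintype.sum_prod_type,
    ite_mul, zero_mul, Finset.sum_ite_eq, Finset.mem_univ, if_true]
  exact Finset.sum_comm

theorem posSemidef_blockDiagonal_iff {R : Type*} [CommRing R] [PartialOrder R] [StarRing R]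
    [IsOrderedAddMonoid R] {f : o → Matrix m m R} :
    (blockDiagonal f).PosSemidef ↔ ∀ j, (f j).PosSemidef := by
  refine ⟨fun h j => by simpa using h.submatrix fun i => (i, j), fun h => ?_⟩
  simp only [posSemidef_iff_dotProduct_mulVec, isHermitian_blockDiagonal_iff,
    dotProduct_blockDiagonal_mulVec] at h ⊢
  exact ⟨fun j => (h j).1, fun x => Finset.sum_nonneg fun j _ => (h j).2 _⟩

theorem posDef_blockDiagonal_iff {𝕜 : Type*} [RCLike 𝕜] [DecidableEq m]
    {f : o → Matrix m m 𝕜} :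
    (blockDiagonal f).PosDef ↔ ∀ j, (f j).PosDef := by
  refine ⟨fun h j => ?_, fun h => ?_⟩
  · simpa using h.submatrix (e := fun i => (i, j)) fun _ _ h => (Prod.mk.inj h).1
  · rw [(posSemidef_blockDiagonal_iff.mpr fun j => (h j).posSemidef).posDef_iff_det_ne_zero,
      det_blockDiagonal]
    exact Finset.prod_ne_zero_iff.mpr fun j _ => (h j).det_pos.ne'

end BlockDiagonal

end Matrix

theorem det_pauliY_block (t e : ℝ) :
    !![(e : ℂ), -(t * I); t * I, e].det = ((e ^ 2 - t ^ 2 : ℝ) : ℂ) := by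
  rw [det_fin_two_of]
  push_cast
  linear_combination (t : ℂ) ^ 2 * I_sq

theorem pauliY_block_eq_smul_vecMulVec_add (t e : ℝ) :
    !![(e : ℂ), -(t * I); t * I, e] =
      ((e + t) / 2 : ℝ) • vecMulVec ![1, I] (star ![1, I]) +
        ((e - t) / 2 : ℝ) • vecMulVec ![1, -I] (star ![1, -I]) := by
  ext i k
  fin_cases i <;> fin_cases k <;> simp [vecMulVec, Complex.ext_iff] <;> ring

theorem dotProduct_pauliY_block_mulVec (t e σ : ℝ) :
    star ![1, σ * I] ⬝ᵥ !![(e : ℂ), -(t * I); t * I, e] *ᵥ ![1, σ * I] =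
      ((e * (1 + σ ^ 2) + 2 * σ * t : ℝ) : ℂ) := by
  simp [dotProduct, mulVec, Fin.sum_univ_two, Complex.ext_iff, pow_two]
  ring

theorem posSemidef_pauliY_block_iff {t e : ℝ} :
    !![(e : ℂ), -(t * I); t * I, e].PosSemidef ↔ |t| ≤ e := by
  refine ⟨fun h => abs_le.mpr ⟨?_, ?_⟩, fun h => ?_⟩
  · have := h.dotProduct_mulVec_nonneg ![1, (1 : ℝ) * I]
    rw [dotProduct_pauliY_block_mulVec, zero_le_real] at this
    linarith
  · have := h.dotProduct_mulVec_nonneg ![1, (-1 : ℝ) * I]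
    rw [dotProduct_pauliY_block_mulVec, zero_le_real] at this
    linarith
  · obtain ⟨h₁, h₂⟩ := abs_le.mp h
    rw [pauliY_block_eq_smul_vecMulVec_add]
    exact .add ((posSemidef_vecMulVec_self_star _).smul (by linarith))
      ((posSemidef_vecMulVec_self_star _).smul (by linarith))

theorem posDef_pauliY_block_iff {t e : ℝ} :
    !![(e : ℂ), -(t * I); t * I, e].PosDef ↔ |t| < e := by
  refine ⟨fun h => ?_, fun h => ?_⟩
  · have hdet := h.det_pos
    rw [det_pauliY_block, zero_lt_real, sub_pos] at hdet
    exact abs_lt_of_sq_lt_sq hdet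
      ((abs_nonneg t).trans (posSemidef_pauliY_block_iff.mp h.posSemidef))
  · rw [(posSemidef_pauliY_block_iff.mpr h.le).posDef_iff_det_ne_zero, det_pauliY_block,
      ofReal_ne_zero, sub_ne_zero]
    exact (sq_lt_sq' (neg_lt_of_abs_lt h) (lt_of_abs_lt h)).ne'

theorem det_stdSymplectic (s : ℕ) : (stdSymplectic s).det = 1 := by
  simp [stdSymplectic, det_blockDiagonal, det_fin_two_of]

theorem isUnit_of_transpose_mul_stdSymplectic_mul {s : ℕ}
    {T : Matrix (Fin 2 × Fin s) (Fin 2 × Fin s) ℝ}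
    (hT : Tᵀ * stdSymplectic s * T = stdSymplectic s) : IsUnit T := by
  have hdet := congrArg det hT
  rw [det_mul, det_mul, det_transpose, det_stdSymplectic, mul_one] at hdet
  exact (isUnit_iff_isUnit_det T).mpr (IsUnit.of_mul_eq_one _ hdet)

theorem star_map_ofReal_mul_mul {n : Type*} [Fintype n] (T A : Matrix n n ℝ) :
    star (T.map ofReal) * A.map ofReal * T.map ofReal = (Tᵀ * A * T).map ofReal := by
  rw [star_eq_conjTranspose, ← conjTranspose_map _ fun _ => (conj_ofReal _).symm,
    conjTranspose_eq_transpose_of_trivial]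
  change _ = (Tᵀ * A * T).map ofRealHom
  rw [Matrix.map_mul, Matrix.map_mul]
  rfl

section Williamson

variable {s : ℕ} {α T : Matrix (Fin 2 × Fin s) (Fin 2 × Fin s) ℝ} {d : Fin s → ℝ}

theorem star_map_ofReal_mul_add_smul_stdSymplectic_mul
    (hT : Tᵀ * stdSymplectic s * T = stdSymplectic s)
    (hTα : Tᵀ * α * T = blockDiagonal fun j => d j • (1 : Matrix (Fin 2) (Fin 2) ℝ)) (t : ℝ) :
    star (T.map ofReal) * (α.map ofReal + (t * I) • (stdSymplectic s).map ofReal) *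
        T.map ofReal =
      blockDiagonal fun j => !![(d j : ℂ), -(t * I); t * I, d j] := by
  rw [mul_add, add_mul, mul_smul_comm, smul_mul_assoc, star_map_ofReal_mul_mul,
    star_map_ofReal_mul_mul, hT, hTα, stdSymplectic, blockDiagonal_map _ _ ofReal_zero,
    blockDiagonal_map _ _ ofReal_zero, ← blockDiagonal_smul, ← blockDiagonal_add]
  congr 1
  funext j
  ext i k
  fin_cases i <;> fin_cases k <;> simp

theorem posSemidef_add_smul_stdSymplectic_iff
    (hT : Tᵀ * stdSymplectic s * T = stdSymplectic s)
    (hTα : Tᵀ * α * T = blockDiagonal fun j => d j • (1 : Matrix (Fin 2) (Fin 2) ℝ)) (t : ℝ) :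
    (α.map ofReal + (t * I) • (stdSymplectic s).map ofReal).PosSemidef ↔ ∀ j, |t| ≤ d j := by
  have hU : IsUnit (T.map ofReal) :=
    (isUnit_of_transpose_mul_stdSymplectic_mul hT).map ofRealHom.mapMatrix
  rw [← hU.posSemidef_star_left_conjugate_iff,
    star_map_ofReal_mul_add_smul_stdSymplectic_mul hT hTα, posSemidef_blockDiagonal_iff]
  simp only [posSemidef_pauliY_block_iff]

theorem posDef_add_smul_stdSymplectic_iff
    (hT : Tᵀ * stdSymplectic s * T = stdSymplectic s)
    (hTα : Tᵀ * α * T = blockDiagonal fun j => d j • (1 : Matrix (Fin 2) (Fin 2) ℝ)) (t : ℝ) :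
    (α.map ofReal + (t * I) • (stdSymplectic s).map ofReal).PosDef ↔ ∀ j, |t| < d j := by
  have hU : IsUnit (T.map ofReal) :=
    (isUnit_of_transpose_mul_stdSymplectic_mul hT).map ofRealHom.mapMatrix
  rw [← hU.posDef_star_left_conjugate_iff,
    star_map_ofReal_mul_add_smul_stdSymplectic_mul hT hTα, posDef_blockDiagonal_iff]
  simp only [posDef_pauliY_block_iff]

end Williamson

theorem gaussian_state_condition_symplectic_eigenvalues_general (s : ℕ)
    (α : Matrix (Fin 2 × Fin s) (Fin 2 × Fin s) ℝ)
    (T : Matrix (Fin 2 × Fin s) (Fin 2 × Fin s) ℝ)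
    (hT : Tᵀ * stdSymplectic s * T = stdSymplectic s)
    (d : Fin s → ℝ)
    (hTα : Tᵀ * α * T =
      Matrix.blockDiagonal (fun j : Fin s => d j • (1 : Matrix (Fin 2) (Fin 2) ℝ))) :
    ((α.map (Complex.ofReal) +
        (Complex.I / 2) • (stdSymplectic s).map (Complex.ofReal)).PosSemidef ↔
      ∀ j, 1 / 2 ≤ d j) ∧
    ((α.map (Complex.ofReal) -
        (Complex.I / 2) • (stdSymplectic s).map (Complex.ofReal)).PosDef ↔
      ∀ j, 1 / 2 < d j) := by
  have hplus : I / 2 = ((1 / 2 : ℝ) : ℂ) * I := by push_cast; ring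
  have hminus : α.map ofReal - (I / 2) • (stdSymplectic s).map ofReal =
      α.map ofReal + (((-1 / 2 : ℝ) : ℂ) * I) • (stdSymplectic s).map ofReal := by
    rw [sub_eq_add_neg, ← neg_smul]
    congr 2
    push_cast
    ring
  rw [hminus, hplus, posSemidef_add_smul_stdSymplectic_iff hT hTα,
    posDef_add_smul_stdSymplectic_iff hT hTα]
  norm_num [abs_of_pos]

/-- In terms of the symplectic eigenvalues `d j` of `α`:
(a) `α + (i/2)Δ ≥ 0` iff `d j ≥ 1/2` for all `j`;
(b) `α − (i/2)Δ > 0` iff `d j > 1/2` for all `j`. -/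
theorem gaussian_state_condition_symplectic_eigenvalues (s : ℕ) (hs : 1 ≤ s)
    (α : Matrix (Fin 2 × Fin s) (Fin 2 × Fin s) ℝ)
    (hα : α.PosDef) (hαsymm : α.IsSymm)
    (T : Matrix (Fin 2 × Fin s) (Fin 2 × Fin s) ℝ)
    (hT : Tᵀ * stdSymplectic s * T = stdSymplectic s)
    (d : Fin s → ℝ) (hd : ∀ j, 0 < d j)
    (hTα : Tᵀ * α * T =
      Matrix.blockDiagonal (fun j : Fin s => d j • (1 : Matrix (Fin 2) (Fin 2) ℝ))) :
    ((α.map (Complex.ofReal) +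
        (Complex.I / 2) • (stdSymplectic s).map (Complex.ofReal)).PosSemidef ↔
      ∀ j, 1 / 2 ≤ d j) ∧
    ((α.map (Complex.ofReal) -
        (Complex.I / 2) • (stdSymplectic s).map (Complex.ofReal)).PosDef ↔
      ∀ j, 1 / 2 < d j) :=
  gaussian_state_condition_symplectic_eigenvalues_general s α T hT d hTα
end

section
/- Let Δ be the standard 2s×2s symplectic matrix (block-diagonal with blocks [[0, −1], [1, 0]]), α a real symmetric positive definite 2s×2s matrix, and T a real matrix with TᵀΔT = Δ and TᵀαT block-diagonal with blocks d_j·I₂, d_j > 0. Then det(Δ⁻¹α − (i/2)·I) = ∏_{j=1}^{s} (d_j² − 1/4), where the determinant is of the complex 2s×2s matrix. -/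
open Matrix

/-- `det(Δ⁻¹ α − (i/2) I) = ∏ j (d j² − 1/4)` where the `d j` are the symplectic
eigenvalues of `α`. -/
theorem det_inv_symplectic_mul_covariance_sub_half_I (s : ℕ) (hs : 1 ≤ s)
    (α : Matrix (Fin 2 × Fin s) (Fin 2 × Fin s) ℝ)
    (hα : α.PosDef) (hαsymm : α.IsSymm)
    (T : Matrix (Fin 2 × Fin s) (Fin 2 × Fin s) ℝ)
    (hT : Tᵀ * stdSymplectic s * T = stdSymplectic s)
    (d : Fin s → ℝ) (hd : ∀ j, 0 < d j)
    (hTα : Tᵀ * α * T =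
      Matrix.blockDiagonal (fun j : Fin s => d j • (1 : Matrix (Fin 2) (Fin 2) ℝ))) :
    Matrix.det ((((stdSymplectic s)⁻¹ * α).map (Complex.ofReal)) -
        (Complex.I / 2) • (1 : Matrix (Fin 2 × Fin s) (Fin 2 × Fin s) ℂ)) =
      ∏ j : Fin s, ((d j : ℂ) ^ 2 - 1 / 4) := by
  set Δ := stdSymplectic s with hΔdef
  have hdetΔ : Δ.det = 1 := by
    rw [hΔdef, stdSymplectic, Matrix.det_blockDiagonal]
    simp [Matrix.det_fin_two_of]
  have hΔinv : Δ * Δ⁻¹ = 1 := Matrix.mul_nonsing_inv _ (by rw [hdetΔ]; exact isUnit_one)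
  -- complex versions
  set f := Complex.ofRealHom
  have hmap : ∀ (A B : Matrix (Fin 2 × Fin s) (Fin 2 × Fin s) ℝ),
      (A * B).map Complex.ofReal = A.map Complex.ofReal * B.map Complex.ofReal := by
    intro A B
    exact Matrix.map_mul (f := f)
  set c : ℂ := Complex.I / 2 with hc
  set Δℂ := Δ.map Complex.ofReal with hΔℂ
  set αℂ := α.map Complex.ofReal with hαℂ
  set Tℂ := T.map Complex.ofReal with hTℂ
  have hdetΔℂ : Δℂ.det = 1 := by
    have : Δℂ.det = (Δ.det : ℂ) := (RingHom.map_det f Δ).symm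
    rw [this, hdetΔ, Complex.ofReal_one]
  have hdetT2 : Tℂ.det * Tℂ.det = 1 := by
    have h1 : Tᵀ.det * Δ.det * T.det = Δ.det := by rw [← Matrix.det_mul, ← Matrix.det_mul, hT]
    rw [Matrix.det_transpose, hdetΔ] at h1
    have h2 : T.det * T.det = 1 := by linarith [h1]
    have : Tℂ.det = (T.det : ℂ) := (RingHom.map_det f T).symm
    rw [this, ← Complex.ofReal_mul, h2, Complex.ofReal_one]
  -- step 1: multiply by Δℂ
  have step1 : Matrix.det (((Δ⁻¹ * α).map Complex.ofReal) - c • 1) = (αℂ - c • Δℂ).det := by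
    calc Matrix.det (((Δ⁻¹ * α).map Complex.ofReal) - c • 1)
        = Δℂ.det * Matrix.det (((Δ⁻¹ * α).map Complex.ofReal) - c • 1) := by
          rw [hdetΔℂ, one_mul]
      _ = (Δℂ * (((Δ⁻¹ * α).map Complex.ofReal) - c • 1)).det := (Matrix.det_mul _ _).symm
      _ = (αℂ - c • Δℂ).det := by
          congr 1
          rw [Matrix.mul_sub, ← hmap, ← Matrix.mul_assoc, hΔinv, Matrix.one_mul,
            Matrix.mul_smul, Matrix.mul_one]
  -- step 2: conjugate by T
  have step2 : (αℂ - c • Δℂ).det =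
      ((Tᵀ * α * T).map Complex.ofReal - c • (Tᵀ * Δ * T).map Complex.ofReal).det := by
    have : (Tᵀ * α * T).map Complex.ofReal - c • (Tᵀ * Δ * T).map Complex.ofReal
        = (Tℂ)ᵀ * (αℂ - c • Δℂ) * Tℂ := by
      rw [hmap, hmap, hmap, hmap]
      have ht : Tᵀ.map Complex.ofReal = (Tℂ)ᵀ := by
        rw [hTℂ, Matrix.transpose_map]
      rw [ht, Matrix.mul_sub, Matrix.sub_mul, Matrix.mul_smul, Matrix.smul_mul]
    rw [this, Matrix.det_mul, Matrix.det_mul, Matrix.det_transpose]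
    linear_combination (-(αℂ - c • Δℂ).det) * hdetT2
  -- step 3: evaluate block diagonal determinant
  rw [step1, step2, hT, hTα]
  rw [Matrix.blockDiagonal_map _ _ (Complex.ofReal_zero), hΔdef, stdSymplectic,
    Matrix.blockDiagonal_map _ _ (Complex.ofReal_zero), ← Matrix.blockDiagonal_smul,
    ← Matrix.blockDiagonal_sub, Matrix.det_blockDiagonal]
  refine Finset.prod_congr rfl fun j _ => ?_
  have h1 : ((d j • (1 : Matrix (Fin 2) (Fin 2) ℝ)).map Complex.ofReal)
      = !![(d j : ℂ), 0; 0, (d j : ℂ)] := by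
    ext i k
    fin_cases i <;> fin_cases k <;> simp [Matrix.map_apply, Matrix.one_apply]
  have h2 : ((!![0, -1; 1, 0] : Matrix (Fin 2) (Fin 2) ℝ).map Complex.ofReal)
      = !![(0:ℂ), -1; 1, 0] := by
    ext i k
    fin_cases i <;> fin_cases k <;> simp [Matrix.map_apply]
  simp only [Pi.sub_apply, Pi.smul_apply]
  rw [h1, h2]
  rw [show (!![(d j : ℂ), 0; 0, (d j : ℂ)] - c • !![(0:ℂ), -1; 1, 0])
      = !![(d j : ℂ), c; -c, (d j : ℂ)] by
    ext i k
    fin_cases i <;> fin_cases k <;> simp]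
  rw [Matrix.det_fin_two_of]
  rw [hc]
  ring_nf
  rw [Complex.I_sq]
  ring
end
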